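/- Let Φ be a root system with positive roots Φ⁺, Θ a subset of the simple roots with associated parabolic subgroup W_Θ ≤ W, and I ⊆ Φ⁺ a W_Θ-stable subset with Φ⁺_Θ ⊆ I closed under the ideal condition (i.e., I = I(H) for a p-Hessenberg space). Then under the identification of star-invariants with functions on cosets, the star-invariant subalgebra M(I)^{W_Θ(star)} of the GKM algebra M(I) = { f : W → R | f(w) − f(w s_α) ∈ (w(α)) for all α ∈ I } is isomorphic as an R-algebra to M_Θ(I) = { g : W/W_Θ → R | g(wW_Θ) − g(w s_α W_Θ) ∈ (w(α)) for all α ∈ I \ Φ⁺_Θ }. -/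
import Mathlib


/-- The star action of `u` on `Map(W, R)`: `(u ∗ f)(v) = f(v u)`. -/
def starAct {W R : Type*} [Group W] [CommRing R] (u : W) (f : W → R) : W → R :=
  fun v => f (v * u)

/-- Here `R` plays the role of `Sym(t*_ℚ)` with its natural `W`-action,
positive roots are elements of `R` (`Φp : Set R`), `s γ ∈ W` is the reflection along
`γ`, `ΦΘ = Φ⁺_Θ`, and `I = I(H)` is a `Θ`-ideal (hypotheses `hΘI`, `hclos`), with the
reflections along roots of `ΦΘ` lying in the parabolic subgroup `W_Θ` (`hsΘ`).
Then the `R`-algebra map `P : Map(W/W_Θ, R) → Map(W, R)` of precomposition with the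
quotient map restricts to a bijection from the partial GKM algebra
`M_Θ(I) = { g | g(wW_Θ) − g(w s_γ W_Θ) ∈ (w(γ)) for all γ ∈ I \ Φ⁺_Θ }` onto the
star-invariant part `M(I)^{W_Θ(star)}` of
`M(I) = { f | f(w) − f(w s_γ) ∈ (w(γ)) for all γ ∈ I }`. -/
theorem stmt6 {W R : Type*} [Group W] [CommRing R] [MulSemiringAction W R]
    (WΘ : Subgroup W) (Φp : Set R) (s : R → W) (I ΦΘ : Set R)
    (hIΦ : I ⊆ Φp) (hΘI : ΦΘ ⊆ I)
    (hsΘ : ∀ β ∈ ΦΘ, s β ∈ WΘ)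
    (hclos : ∀ β ∈ ΦΘ, ∀ γ ∈ I \ ΦΘ, s β • γ ∈ Φp → s β • γ ∈ I) :
    ∃ P : ((W ⧸ WΘ) → R) →ₐ[R] (W → R),
      (∀ (g : (W ⧸ WΘ) → R) (w : W), P g w = g (QuotientGroup.mk w)) ∧
      Set.BijOn P
        {g : (W ⧸ WΘ) → R | ∀ (w : W), ∀ γ ∈ I \ ΦΘ,
          g (QuotientGroup.mk w) - g (QuotientGroup.mk (w * s γ)) ∈ Ideal.span {w • γ}}
        {f : W → R |
          (∀ (w : W), ∀ γ ∈ I, f w - f (w * s γ) ∈ Ideal.span {w • γ}) ∧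
          (∀ u ∈ WΘ, starAct u f = f)} := by
  refine ⟨{ toFun := fun g w => g (QuotientGroup.mk w),
            map_one' := rfl, map_mul' := fun _ _ => rfl,
            map_zero' := rfl, map_add' := fun _ _ => rfl,
            commutes' := fun _ => rfl }, fun g w => rfl, ?_, ?_, ?_⟩
  · -- MapsTo
    intro g hg
    refine ⟨fun w γ hγ => ?_, fun u hu => funext fun v => ?_⟩
    · by_cases hΘ : γ ∈ ΦΘ
      · have : QuotientGroup.mk (w * s γ) = (QuotientGroup.mk w : W ⧸ WΘ) :=
          QuotientGroup.mk_mul_of_mem w (hsΘ γ hΘ)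
        show g (QuotientGroup.mk w) - g (QuotientGroup.mk (w * s γ)) ∈ _
        rw [this, sub_self]
        exact Ideal.zero_mem _
      · exact hg w γ ⟨hγ, hΘ⟩
    · show g (QuotientGroup.mk (v * u)) = g (QuotientGroup.mk v)
      rw [QuotientGroup.mk_mul_of_mem v hu]
  · -- InjOn
    intro g₁ _ g₂ _ h
    funext q
    induction q using Quotient.inductionOn with
    | h w => exact congrFun h w
  · -- SurjOn
    intro f hf
    obtain ⟨hgkm, hstar⟩ := hf
    set g : (W ⧸ WΘ) → R := fun q => f q.out with hg
    have hPg : ∀ w : W, g (QuotientGroup.mk w) = f w := by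
      intro w
      obtain ⟨h, hh⟩ := QuotientGroup.mk_out_eq_mul WΘ w
      show f (QuotientGroup.mk w).out = f w
      rw [hh]
      exact congrFun (hstar h h.2) w
    refine ⟨g, fun w γ hγ => ?_, funext fun w => hPg w⟩
    rw [hPg, hPg]
    exact hgkm w γ hγ.1
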